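/- arXiv:1210.0090 — 3 statements merged into one kernel-verified Lean document; each statement's English description precedes it below -/
import Mathlib

section
/- Let a, b, c : ℕ → ℝ be the sequences with a₀ = 1, b₀ = 0, c₀ = 0 and a_{n+1} = 3a_n³ + 6a_n²b_n, b_{n+1} = a_n³ + 7a_n²b_n + 7a_n b_n² + a_n²c_n, c_{n+1} = a_n³ + 12a_n²b_n + 36a_n b_n² + 14b_n³ + 3a_n²c_n + 12a_n b_n c_n. Then for every n ≥ 0, b_n = (1/2) · 15^{(1/4)(−1 + 3^n − 2n)} · (5^n − 3^n). -/
/-! The sequences are `a n = 3^n s n`, `b n = s n (5^n - 3^n) / 2` and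
`c n = 3 s n (5^n - 3^n)^2 / (4 · 3^n)` with the common scale `s n = 15^((3^n - 1 - 2n)/4)`.
Since `s (n+1) = s n ^ 3 · 15^n` and every right-hand side of the recurrence is cubic,
checking that these closed forms satisfy the recurrence reduces to polynomial identities in
`3^n` and `5^n`; the recurrence then determines the sequences by induction. -/

open Real

namespace Apollonian

noncomputable def scale (n : ℕ) : ℝ :=
  (15 : ℝ) ^ ((1 / 4 : ℝ) * (-1 + (3 : ℝ) ^ n - 2 * (n : ℝ)))

noncomputable def closedA (n : ℕ) : ℝ := (3 : ℝ) ^ n * scale n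

noncomputable def closedB (n : ℕ) : ℝ := scale n * ((5 : ℝ) ^ n - (3 : ℝ) ^ n) / 2

noncomputable def closedC (n : ℕ) : ℝ :=
  3 * scale n * ((5 : ℝ) ^ n - (3 : ℝ) ^ n) ^ 2 / (4 * (3 : ℝ) ^ n)

lemma scale_zero : scale 0 = 1 := by
  simp [scale]

lemma scale_succ (n : ℕ) : scale (n + 1) = scale n ^ 3 * (3 : ℝ) ^ n * (5 : ℝ) ^ n := by
  have h15 : (0 : ℝ) < 15 := by norm_num
  have hexp : (1 / 4 : ℝ) * (-1 + (3 : ℝ) ^ (n + 1) - 2 * ((n + 1 : ℕ) : ℝ))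
      = 3 * ((1 / 4 : ℝ) * (-1 + (3 : ℝ) ^ n - 2 * (n : ℝ))) + (n : ℝ) := by
    push_cast [pow_succ]; ring
  rw [scale, scale, hexp, rpow_add h15, rpow_natCast, mul_comm (3 : ℝ), rpow_mul h15.le,
    ← rpow_natCast _ 3, mul_assoc, ← mul_pow]
  norm_num

section

variable (n : ℕ)

lemma closedA_succ :
    closedA (n + 1) = 3 * closedA n ^ 3 + 6 * closedA n ^ 2 * closedB n := by
  rw [closedA, closedA, closedB, scale_succ]; ring

lemma closedB_succ :
    closedB (n + 1) = closedA n ^ 3 + 7 * closedA n ^ 2 * closedB n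
      + 7 * closedA n * closedB n ^ 2 + closedA n ^ 2 * closedC n := by
  have h3 : (3 : ℝ) ^ n ≠ 0 := by positivity
  rw [closedA, closedB, closedB, closedC, scale_succ]
  field_simp
  ring

lemma closedC_succ :
    closedC (n + 1) = closedA n ^ 3 + 12 * closedA n ^ 2 * closedB n
      + 36 * closedA n * closedB n ^ 2 + 14 * closedB n ^ 3
      + 3 * closedA n ^ 2 * closedC n + 12 * closedA n * closedB n * closedC n := by
  have h3 : (3 : ℝ) ^ n ≠ 0 := by positivity
  rw [closedA, closedB, closedC, closedC, scale_succ]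
  field_simp
  ring

end

theorem eq_closed_forms (a b c : ℕ → ℝ)
    (ha0 : a 0 = 1) (hb0 : b 0 = 0) (hc0 : c 0 = 0)
    (ha : ∀ n, a (n + 1) = 3 * (a n) ^ 3 + 6 * (a n) ^ 2 * b n)
    (hb : ∀ n, b (n + 1) = (a n) ^ 3 + 7 * (a n) ^ 2 * b n + 7 * a n * (b n) ^ 2 + (a n) ^ 2 * c n)
    (hc : ∀ n, c (n + 1) = (a n) ^ 3 + 12 * (a n) ^ 2 * b n + 36 * a n * (b n) ^ 2 + 14 * (b n) ^ 3
        + 3 * (a n) ^ 2 * c n + 12 * a n * b n * c n) (n : ℕ) :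
    a n = closedA n ∧ b n = closedB n ∧ c n = closedC n := by
  induction n with
  | zero => simp [closedA, closedB, closedC, scale_zero, ha0, hb0, hc0]
  | succ n ih =>
    obtain ⟨iha, ihb, ihc⟩ := ih
    refine ⟨?_, ?_, ?_⟩
    · rw [ha, closedA_succ, iha, ihb]
    · rw [hb, closedB_succ, iha, ihb, ihc]
    · rw [hc, closedC_succ, iha, ihb, ihc]

end Apollonian

theorem apollonian_b_closed_form
    (a b c : ℕ → ℝ)
    (ha0 : a 0 = 1) (hb0 : b 0 = 0) (hc0 : c 0 = 0)
    (ha : ∀ n, a (n + 1) = 3 * (a n) ^ 3 + 6 * (a n) ^ 2 * b n)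
    (hb : ∀ n, b (n + 1) = (a n) ^ 3 + 7 * (a n) ^ 2 * b n + 7 * a n * (b n) ^ 2 + (a n) ^ 2 * c n)
    (hc : ∀ n, c (n + 1) = (a n) ^ 3 + 12 * (a n) ^ 2 * b n + 36 * a n * (b n) ^ 2 + 14 * (b n) ^ 3
        + 3 * (a n) ^ 2 * c n + 12 * a n * b n * c n) :
    ∀ n : ℕ, b n = (1 / 2) * (15 : ℝ) ^ ((1 / 4 : ℝ) * (-1 + (3 : ℝ) ^ n - 2 * (n : ℝ)))
        * ((5 : ℝ) ^ n - (3 : ℝ) ^ n) := by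
  intro n
  rw [(Apollonian.eq_closed_forms a b c ha0 hb0 hc0 ha hb hc n).2.1, Apollonian.closedB,
    Apollonian.scale]
  ring
end

section
/- Let a, b, c : ℕ → ℝ be the sequences with a₀ = 1, b₀ = 0, c₀ = 0 and a_{n+1} = 3a_n³ + 6a_n²b_n, b_{n+1} = a_n³ + 7a_n²b_n + 7a_n b_n² + a_n²c_n, c_{n+1} = a_n³ + 12a_n²b_n + 36a_n b_n² + 14b_n³ + 3a_n²c_n + 12a_n b_n c_n. Then for every n ≥ 0, b_{n+1} / a_{n+1} = −1/2 + 5·a_{n+1} / (18·a_n³). -/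
/-!
The recursion preserves the relation `a * c = 3 * b ^ 2`, which holds at `n = 0`. Under it,
writing `x = b / a`, one step gives `a' = 3 a³ (1 + 2x)` and `b' = a³ (1 + 2x) (1 + 5x)`, so
`b' / a' = (1 + 5x) / 3`, and `-1/2 + 5 a' / (18 a³) = -1/2 + 5 (1 + 2x) / 6` is the same number.
Positivity of the sequences keeps `a` and `1 + 2x` away from zero.
-/

def apollonianA (a b : ℝ) : ℝ := 3 * a ^ 3 + 6 * a ^ 2 * b

def apollonianB (a b c : ℝ) : ℝ := a ^ 3 + 7 * a ^ 2 * b + 7 * a * b ^ 2 + a ^ 2 * c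

def apollonianC (a b c : ℝ) : ℝ :=
  a ^ 3 + 12 * a ^ 2 * b + 36 * a * b ^ 2 + 14 * b ^ 3 + 3 * a ^ 2 * c + 12 * a * b * c

section Step

variable {a b c : ℝ}

lemma apollonianA_mul_apollonianC (h : a * c = 3 * b ^ 2) :
    apollonianA a b * apollonianC a b c = 3 * apollonianB a b c ^ 2 := by
  unfold apollonianA apollonianB apollonianC
  linear_combination (3 * a ^ 4 + 12 * a ^ 3 * b + 21 * a ^ 2 * b ^ 2 - 3 * a ^ 3 * c) * h

lemma apollonianA_eq_mul (a b : ℝ) : apollonianA a b = 3 * a ^ 2 * (a + 2 * b) := by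
  unfold apollonianA
  ring

lemma apollonianB_div_apollonianA (h : a * c = 3 * b ^ 2) (ha : a ≠ 0) (hab : a + 2 * b ≠ 0) :
    apollonianB a b c / apollonianA a b = (a + 5 * b) / (3 * a) := by
  rw [apollonianA_eq_mul, div_eq_div_iff (by positivity) (by positivity)]
  unfold apollonianB
  linear_combination 3 * a ^ 2 * h

lemma neg_half_add_apollonianA_div (ha : a ≠ 0) :
    -(1 / 2) + 5 * apollonianA a b / (18 * a ^ 3) = (a + 5 * b) / (3 * a) := by
  unfold apollonianA
  field_simp
  ring

end Step

lemma apollonian_pos_and_relation (a b c : ℕ → ℝ) (ha0 : a 0 = 1) (hb0 : b 0 = 0) (hc0 : c 0 = 0)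
    (ha : ∀ n, a (n + 1) = apollonianA (a n) (b n))
    (hb : ∀ n, b (n + 1) = apollonianB (a n) (b n) (c n))
    (hc : ∀ n, c (n + 1) = apollonianC (a n) (b n) (c n)) (n : ℕ) :
    0 < a n ∧ 0 ≤ b n ∧ 0 ≤ c n ∧ a n * c n = 3 * b n ^ 2 := by
  induction n with
  | zero => simp [ha0, hb0, hc0]
  | succ k ih =>
    obtain ⟨hak, hbk, hck, hrel⟩ := ih
    rw [ha, hb, hc]
    refine ⟨?_, ?_, ?_, apollonianA_mul_apollonianC hrel⟩ <;>
      simp only [apollonianA, apollonianB, apollonianC] <;> positivity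

theorem apollonian_b_over_a
    (a b c : ℕ → ℝ)
    (ha0 : a 0 = 1) (hb0 : b 0 = 0) (hc0 : c 0 = 0)
    (ha : ∀ n, a (n + 1) = 3 * (a n) ^ 3 + 6 * (a n) ^ 2 * b n)
    (hb : ∀ n, b (n + 1) = (a n) ^ 3 + 7 * (a n) ^ 2 * b n + 7 * a n * (b n) ^ 2 + (a n) ^ 2 * c n)
    (hc : ∀ n, c (n + 1) = (a n) ^ 3 + 12 * (a n) ^ 2 * b n + 36 * a n * (b n) ^ 2 + 14 * (b n) ^ 3
        + 3 * (a n) ^ 2 * c n + 12 * a n * b n * c n) :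
    ∀ n : ℕ, b (n + 1) / a (n + 1) = -(1 / 2) + 5 * a (n + 1) / (18 * (a n) ^ 3) := by
  intro n
  obtain ⟨ha_pos, hb_nonneg, -, hrel⟩ :=
    apollonian_pos_and_relation a b c ha0 hb0 hc0 ha hb hc n
  have hab : a n + 2 * b n ≠ 0 := by positivity
  rw [ha n, hb n]
  exact (apollonianB_div_apollonianA hrel ha_pos.ne' hab).trans
    (neg_half_add_apollonianA_div ha_pos.ne').symm
end

section
/- Let a, b, c : ℕ → ℝ be the sequences with a₀ = 1, b₀ = 0, c₀ = 0 and a_{n+1} = 3a_n³ + 6a_n²b_n, b_{n+1} = a_n³ + 7a_n²b_n + 7a_n b_n² + a_n²c_n, c_{n+1} = a_n³ + 12a_n²b_n + 36a_n b_n² + 14b_n³ + 3a_n²c_n + 12a_n b_n c_n. Then for every n ≥ 0, b_{n+1} / a_n³ = 1 + 7·(b_n / a_n) + 10·(b_n / a_n)². -/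
/-!
The recursions preserve the invariant `a n * c n = 3 * b n ^ 2`, and under it
`b (n + 1) = a n * (a n + 2 * b n) * (a n + 5 * b n)`. Dividing by `a n ^ 3`, which is positive
because `a (n + 1) = 3 * a n ^ 2 * (a n + 2 * b n)` with `b n ≥ 0`, gives the quadratic in `b n / a n`.
-/

section ApollonianRecursion

variable {a b c : ℕ → ℝ}

theorem apollonian_invariant (hb0 : b 0 = 0) (hc0 : c 0 = 0)
    (ha : ∀ n, a (n + 1) = 3 * (a n) ^ 3 + 6 * (a n) ^ 2 * b n)
    (hb : ∀ n, b (n + 1) = (a n) ^ 3 + 7 * (a n) ^ 2 * b n + 7 * a n * (b n) ^ 2 + (a n) ^ 2 * c n)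
    (hc : ∀ n, c (n + 1) = (a n) ^ 3 + 12 * (a n) ^ 2 * b n + 36 * a n * (b n) ^ 2 + 14 * (b n) ^ 3
        + 3 * (a n) ^ 2 * c n + 12 * a n * b n * c n) :
    ∀ n, a n * c n = 3 * b n ^ 2 := by
  intro n
  induction n with
  | zero => simp [hb0, hc0]
  | succ n ih =>
    rw [ha, hb, hc]
    linear_combination (3 * a n ^ 4 + 12 * a n ^ 3 * b n + 21 * a n ^ 2 * b n ^ 2
      - 3 * a n ^ 3 * c n) * ih

theorem apollonian_b_succ_eq_mul
    (hb : ∀ n, b (n + 1) = (a n) ^ 3 + 7 * (a n) ^ 2 * b n + 7 * a n * (b n) ^ 2 + (a n) ^ 2 * c n)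
    {n : ℕ} (hinv : a n * c n = 3 * b n ^ 2) :
    b (n + 1) = a n * (a n + 2 * b n) * (a n + 5 * b n) := by
  rw [hb]
  linear_combination a n * hinv

theorem apollonian_a_pos_b_nonneg (ha0 : a 0 = 1) (hb0 : b 0 = 0)
    (ha : ∀ n, a (n + 1) = 3 * (a n) ^ 3 + 6 * (a n) ^ 2 * b n)
    (hb_mul : ∀ n, b (n + 1) = a n * (a n + 2 * b n) * (a n + 5 * b n)) :
    ∀ n, 0 < a n ∧ 0 ≤ b n := by
  intro n
  induction n with
  | zero => simp [ha0, hb0]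
  | succ n ih =>
    obtain ⟨ha_pos, hb_nonneg⟩ := ih
    exact ⟨by rw [ha]; positivity, by rw [hb_mul]; positivity⟩

end ApollonianRecursion

theorem apollonian_b_quotient_recursion
    (a b c : ℕ → ℝ)
    (ha0 : a 0 = 1) (hb0 : b 0 = 0) (hc0 : c 0 = 0)
    (ha : ∀ n, a (n + 1) = 3 * (a n) ^ 3 + 6 * (a n) ^ 2 * b n)
    (hb : ∀ n, b (n + 1) = (a n) ^ 3 + 7 * (a n) ^ 2 * b n + 7 * a n * (b n) ^ 2 + (a n) ^ 2 * c n)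
    (hc : ∀ n, c (n + 1) = (a n) ^ 3 + 12 * (a n) ^ 2 * b n + 36 * a n * (b n) ^ 2 + 14 * (b n) ^ 3
        + 3 * (a n) ^ 2 * c n + 12 * a n * b n * c n) :
    ∀ n : ℕ, b (n + 1) / (a n) ^ 3 = 1 + 7 * (b n / a n) + 10 * (b n / a n) ^ 2 := by
  have hb_mul n : b (n + 1) = a n * (a n + 2 * b n) * (a n + 5 * b n) :=
    apollonian_b_succ_eq_mul hb (apollonian_invariant hb0 hc0 ha hb hc n)
  intro n
  have ha_ne : a n ≠ 0 := (apollonian_a_pos_b_nonneg ha0 hb0 ha hb_mul n).1.ne'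
  rw [hb_mul]
  field_simp
  ring
end
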